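/- If X is a star Menger space and Y is a Lindelöf, locally compact space, then X × Y is star Menger. -/
import Mathlib


open Set

/-- The star of a set `A` with respect to a family `𝒰`: the union of all members of `𝒰`
meeting `A`. -/
def star' {X : Type*} (A : Set X) (𝒰 : Set (Set X)) : Set X :=
  ⋃₀ {u ∈ 𝒰 | (u ∩ A).Nonempty}

/-- A subset `M` of a space is Menger (as a subspace), expressed relatively: for every
sequence of covers of `M` by open subsets of `X` there are finite subfamilies whose
union covers `M`. -/
def MengerSet {X : Type*} [TopologicalSpace X] (M : Set X) : Prop :=
  ∀ 𝒰 : ℕ → Set (Set X), (∀ n, ∀ u ∈ 𝒰 n, IsOpen u) → (∀ n, M ⊆ ⋃₀ 𝒰 n) →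
    ∃ 𝒱 : ℕ → Set (Set X), (∀ n, 𝒱 n ⊆ 𝒰 n ∧ (𝒱 n).Finite) ∧ M ⊆ ⋃ n, ⋃₀ 𝒱 n

/-- A space `X` is Menger. -/
def MengerSpace (X : Type*) [TopologicalSpace X] : Prop :=
  ∀ 𝒰 : ℕ → Set (Set X), (∀ n, (∀ u ∈ 𝒰 n, IsOpen u) ∧ ⋃₀ 𝒰 n = univ) →
    ∃ 𝒱 : ℕ → Set (Set X), (∀ n, 𝒱 n ⊆ 𝒰 n ∧ (𝒱 n).Finite) ∧ ⋃ n, ⋃₀ 𝒱 n = univ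

/-- A space `X` is star Menger: every open cover has a Menger star kernel. -/
def StarMenger (X : Type*) [TopologicalSpace X] : Prop :=
  ∀ 𝒰 : Set (Set X), (∀ u ∈ 𝒰, IsOpen u) → ⋃₀ 𝒰 = univ →
    ∃ M : Set X, MengerSet M ∧ star' M 𝒰 = univ

lemma mengerSet_iUnion {X : Type*} [TopologicalSpace X] {M : ℕ → Set X}
    (h : ∀ k, MengerSet (M k)) : MengerSet (⋃ k, M k) := by
  intro 𝒰 hop hcov
  have h' : ∀ k, ∃ 𝒱 : ℕ → Set (Set X), (∀ n, 𝒱 n ⊆ 𝒰 (Nat.pair k n) ∧ (𝒱 n).Finite) ∧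
      M k ⊆ ⋃ n, ⋃₀ 𝒱 n := fun k =>
    h k (fun n => 𝒰 (Nat.pair k n)) (fun n => hop _)
      (fun n => (subset_iUnion M k).trans (hcov _))
  choose 𝒱 h𝒱 hMcov using h'
  refine ⟨fun m => 𝒱 m.unpair.1 m.unpair.2, fun m => ?_, ?_⟩
  · have := h𝒱 m.unpair.1 m.unpair.2
    rwa [Nat.pair_unpair] at this
  · intro x hx
    obtain ⟨k, hk⟩ := mem_iUnion.1 hx
    obtain ⟨n, hn⟩ := mem_iUnion.1 (hMcov k hk)
    refine mem_iUnion.2 ⟨Nat.pair k n, ?_⟩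
    simpa [Nat.unpair_pair] using hn

lemma mengerSet_prod {X Y : Type*} [TopologicalSpace X] [TopologicalSpace Y]
    {M : Set X} {K : Set Y} (hM : MengerSet M) (hK : IsCompact K) :
    MengerSet (M ×ˢ K) := by
  intro 𝒰 hop hcov
  have key : ∀ (n : ℕ) (x : X) (y : Y), ∃ (A : Set X) (B : Set Y) (u : Set (X × Y)),
      IsOpen A ∧ IsOpen B ∧ x ∈ A ∧
      (x ∈ M ∧ y ∈ K → y ∈ B ∧ u ∈ 𝒰 n ∧ A ×ˢ B ⊆ u) ∧
      (¬(x ∈ M ∧ y ∈ K) → B = ∅) := by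
    intro n x y
    by_cases hxy : x ∈ M ∧ y ∈ K
    · obtain ⟨u, hu𝒰, hmem⟩ := hcov n (mk_mem_prod hxy.1 hxy.2)
      obtain ⟨A, B, hA, hB, hxA, hyB, hsub⟩ := isOpen_prod_iff.1 (hop n u hu𝒰) x y hmem
      exact ⟨A, B, u, hA, hB, hxA, fun _ => ⟨hyB, hu𝒰, hsub⟩, fun h => absurd hxy h⟩
    · exact ⟨univ, ∅, ∅, isOpen_univ, isOpen_empty, mem_univ x,
        fun h => absurd h hxy, fun _ => rfl⟩
  choose A B u hAop hBop hxA hgood hbad using key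
  have hT : ∀ (n : ℕ) (x : X), ∃ t : Finset Y, x ∈ M → K ⊆ ⋃ y ∈ t, B n x y := by
    intro n x
    by_cases hx : x ∈ M
    · obtain ⟨t, ht⟩ := hK.elim_finite_subcover (B n x) (fun y => hBop n x y)
        (fun y hy => mem_iUnion.2 ⟨y, (hgood n x y ⟨hx, hy⟩).1⟩)
      exact ⟨t, fun _ => ht⟩
    · exact ⟨∅, fun h => absurd h hx⟩
  choose t ht using hT
  set W : ℕ → X → Set X := fun n x => ⋂ y ∈ t n x, A n x y with hW
  set F : ℕ → X → Set (Set (X × Y)) := fun n x => ((u n x) '' ↑(t n x)) ∩ 𝒰 n with hF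
  have hWop : ∀ n x, IsOpen (W n x) := fun n x =>
    isOpen_biInter_finset (fun y _ => hAop n x y)
  have hxW : ∀ n x, x ∈ W n x := fun n x => mem_iInter₂.2 fun y _ => hxA n x y
  have htube : ∀ n x, x ∈ M → W n x ×ˢ K ⊆ ⋃₀ F n x := by
    rintro n x hxM ⟨a, b⟩ ⟨haW, hbK⟩
    obtain ⟨y₀, hy₀t, hbB⟩ := mem_iUnion₂.1 (ht n x hxM hbK)
    have hBne : ¬(B n x y₀ = ∅) := fun h => by rw [h] at hbB; exact hbB
    have hxy : x ∈ M ∧ y₀ ∈ K := by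
      by_contra h; exact hBne (hbad n x y₀ h)
    obtain ⟨-, hu𝒰, hsub⟩ := hgood n x y₀ hxy
    refine ⟨u n x y₀, ⟨mem_image_of_mem _ hy₀t, hu𝒰⟩, hsub ⟨?_, hbB⟩⟩
    exact mem_iInter₂.1 haW y₀ hy₀t
  obtain ⟨𝒱, h𝒱, hMc⟩ := hM (fun n => (W n) '' M)
    (by rintro n w ⟨x, -, rfl⟩; exact hWop n x)
    (fun n x hx => ⟨W n x, mem_image_of_mem _ hx, hxW n x⟩)
  have hS : ∀ n, ∃ S ⊆ M, S.Finite ∧ 𝒱 n = W n '' S := by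
    intro n
    have : ∃ v ⊆ W n '' M, v.Finite ∧ v = 𝒱 n := ⟨𝒱 n, (h𝒱 n).1, (h𝒱 n).2, rfl⟩
    obtain ⟨S, hSM, hSfin, hSeq⟩ := Set.exists_subset_image_finite_and.1 this
    exact ⟨S, hSM, hSfin, hSeq.symm⟩
  choose S hSM hSfin hSeq using hS
  refine ⟨fun n => ⋃ x ∈ S n, F n x, fun n => ⟨?_, ?_⟩, ?_⟩
  · exact iUnion₂_subset fun x _ => inter_subset_right
  · exact (hSfin n).biUnion fun x _ => ((t n x).finite_toSet.image _).inter_of_left _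
  · rintro ⟨a, b⟩ ⟨haM, hbK⟩
    obtain ⟨n, hn⟩ := mem_iUnion.1 (hMc haM)
    obtain ⟨w, hw𝒱, haw⟩ := hn
    rw [hSeq n] at hw𝒱
    obtain ⟨x, hxS, rfl⟩ := hw𝒱
    obtain ⟨v, hv, hav⟩ := htube n x (hSM n hxS) ⟨haw, hbK⟩
    exact mem_iUnion.2 ⟨n, v, mem_iUnion₂.2 ⟨x, hxS, hv⟩, hav⟩

/-- If `X` is star Menger and `Y` is Lindelöf and locally compact (every point has an
open neighbourhood with compact closure), then `X × Y` is star Menger. -/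
theorem stmt16 {X Y : Type*} [TopologicalSpace X] [TopologicalSpace Y]
    (hX : StarMenger X) [LindelofSpace Y]
    (hloc : ∀ y : Y, ∃ V : Set Y, IsOpen V ∧ y ∈ V ∧ IsCompact (closure V)) :
    StarMenger (X × Y) := by
  intro 𝒰 hop hcov
  by_cases hY : Nonempty Y
  case neg =>
    refine ⟨∅, ?_, ?_⟩
    · intro 𝒰' _ _
      exact ⟨fun _ => ∅, fun n => ⟨empty_subset _, finite_empty⟩, empty_subset _⟩
    · ext z
      exact (hY ⟨z.2⟩).elim
  choose V0 hV0op hV0mem hV0cl using hloc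
  obtain ⟨r, hrc, hrcov⟩ := isLindelof_univ.elim_countable_subcover V0 hV0op
    (fun y _ => mem_iUnion.2 ⟨y, hV0mem y⟩)
  obtain ⟨y0⟩ := hY
  have hrne : r.Nonempty := by
    obtain ⟨y, hy, -⟩ := mem_iUnion₂.1 (hrcov (mem_univ y0))
    exact ⟨y, hy⟩
  obtain ⟨f, hf⟩ := hrc.exists_eq_range hrne
  have hcovY : ∀ y : Y, ∃ n, y ∈ V0 (f n) := by
    intro y
    obtain ⟨y', hy'r, hyV⟩ := mem_iUnion₂.1 (hrcov (mem_univ y))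
    rw [hf] at hy'r
    obtain ⟨n, rfl⟩ := hy'r
    exact ⟨n, hyV⟩
  have key : ∀ (x : X) (y : Y), ∃ (A : Set X) (B : Set Y) (u : Set (X × Y)),
      IsOpen A ∧ IsOpen B ∧ x ∈ A ∧ y ∈ B ∧ u ∈ 𝒰 ∧ A ×ˢ B ⊆ u := by
    intro x y
    have : (x, y) ∈ ⋃₀ 𝒰 := hcov ▸ mem_univ _
    obtain ⟨u, hu𝒰, hmem⟩ := this
    obtain ⟨A, B, hA, hB, hxA, hyB, hsub⟩ := isOpen_prod_iff.1 (hop u hu𝒰) x y hmem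
    exact ⟨A, B, u, hA, hB, hxA, hyB, hu𝒰, hsub⟩
  choose A B u hAop hBop hxA hyB hu𝒰 hsub using key
  have hT : ∀ (n : ℕ) (x : X), ∃ t : Finset Y, closure (V0 (f n)) ⊆ ⋃ y ∈ t, B x y :=
    fun n x => (hV0cl (f n)).elim_finite_subcover (B x) (fun y => hBop x y)
      (fun y _ => mem_iUnion.2 ⟨y, hyB x y⟩)
  choose t ht using hT
  set W : ℕ → X → Set X := fun n x => ⋂ y ∈ t n x, A x y with hWdef
  have hMn : ∀ n : ℕ, ∃ M : Set X, MengerSet M ∧ star' M (range (W n)) = univ := by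
    intro n
    refine hX (range (W n)) ?_ ?_
    · rintro w ⟨x, rfl⟩
      exact isOpen_biInter_finset (fun y _ => hAop x y)
    · refine eq_univ_of_forall fun x => ?_
      exact ⟨W n x, mem_range_self x, mem_iInter₂.2 fun y _ => hxA x y⟩
  choose M hMme hstar using hMn
  refine ⟨⋃ n, M n ×ˢ closure (V0 (f n)),
    mengerSet_iUnion (fun n => mengerSet_prod (hMme n) (hV0cl (f n))), ?_⟩
  refine eq_univ_of_forall ?_
  rintro ⟨a, b⟩
  obtain ⟨n, hbV⟩ := hcovY b
  have haS : a ∈ star' (M n) (range (W n)) := (hstar n) ▸ mem_univ a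
  obtain ⟨w, ⟨hwr, hwM⟩, haw⟩ := haS
  obtain ⟨x', rfl⟩ := hwr
  obtain ⟨m, hmw, hmM⟩ := hwM
  obtain ⟨y₀, hy₀t, hbB⟩ := mem_iUnion₂.1 (ht n x' (subset_closure hbV))
  refine ⟨u x' y₀, ⟨hu𝒰 x' y₀, ⟨(m, b), ?_, ?_⟩⟩, ?_⟩
  · exact hsub x' y₀ ⟨mem_iInter₂.1 hmw y₀ hy₀t, hbB⟩
  · exact mem_iUnion.2 ⟨n, hmM, subset_closure hbV⟩
  · exact hsub x' y₀ ⟨mem_iInter₂.1 haw y₀ hy₀t, hbB⟩
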